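/- Let α > 0 and β > 0. Then e₀ < e_T, where e_T is the infimum of the translation-invariant problem; i.e., the delta-well Pekar energy is strictly below the translation-invariant Pekar energy. -/

import Mathlib

open MeasureTheory Real Filter

noncomputable section

/-- An element of the Sobolev space `H¹(ℝ)` of complex-valued functions, represented by its
continuous representative together with its (weak) derivative: the function and the derivative
are square integrable, and the function is the indefinite integral of its derivative. -/
structure H1 where
  toFun : ℝ → ℂ
  deriv : ℝ → ℂ
  memL2 : MemLp toFun 2 (volume : Measure ℝ)
  deriv_memL2 : MemLp deriv 2 (volume : Measure ℝ)
  integral_deriv : ∀ x : ℝ, toFun x = toFun 0 + ∫ t in (0:ℝ)..x, deriv t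

/-- The `L²(ℝ)` norm. -/
def L2norm (f : ℝ → ℂ) : ℝ := (eLpNorm f 2 (volume : Measure ℝ)).toReal

/-- The one-dimensional Pekar functional
`E₀(φ) = ∫ |φ′|² − (α/2) ∫ |φ|⁴ − β |φ(0)|²`. -/
def pekarE0 (α β : ℝ) (φ : H1) : ℝ :=
  (∫ x : ℝ, ‖φ.deriv x‖ ^ 2) - α / 2 * (∫ x : ℝ, ‖φ.toFun x‖ ^ 4) - β * ‖φ.toFun 0‖ ^ 2

/-- The ground-state energy `e₀ = inf {E₀(φ) : ‖φ‖₂ = 1}`. -/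
def groundE0 (α β : ℝ) : ℝ :=
  sInf { r : ℝ | ∃ φ : H1, L2norm φ.toFun = 1 ∧ pekarE0 α β φ = r }


/-- The translation-invariant Pekar functional `E_T(φ) = ∫ |φ′|² − (α/2) ∫ |φ|⁴`. -/
def pekarET (α : ℝ) (φ : H1) : ℝ :=
  (∫ x : ℝ, ‖φ.deriv x‖ ^ 2) - α / 2 * (∫ x : ℝ, ‖φ.toFun x‖ ^ 4)

/-- The translation-invariant ground-state energy `e_T = inf {E_T(φ) : ‖φ‖₂ = 1}`. -/
def groundET (α : ℝ) : ℝ :=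
  sInf { r : ℝ | ∃ φ : H1, L2norm φ.toFun = 1 ∧ pekarET α φ = r }

/-!
Moving a point `a` where `|φ|²` is large to the origin does not change `E_T` and lowers `E₀` by
`β |φ(a)|²`. For a normalized `φ` some `a` has `2 |φ(a)|² ≥ ‖φ‖₄⁴ ≥ -(2/α) E_T(φ)`, so
`e₀ ≤ (1 + β/α) E_T(φ)` for every admissible `φ`, hence `e₀ ≤ (1 + β/α) e_T < e_T`, because the
trial states `√s e^{-s|x|}`, with `E_T = s² - α s / 4`, make `e_T` negative. Both infima are
finite by the Sobolev-type bound `|φ(x)|² ≤ 2 ‖φ‖₂² / L + 2 L ‖φ'‖₂²` for every `L > 0`.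
-/

lemma MeasureTheory.MemLp.intervalIntegrable {E : Type*} [NormedAddCommGroup E] {f : ℝ → E}
    (hf : MemLp f 2 volume) (a b : ℝ) : IntervalIntegrable f volume a b :=
  ((hf.locallyIntegrable one_le_two).integrableOn_isCompact isCompact_uIcc).intervalIntegrable

lemma L2norm_eq_one_iff {f : ℝ → ℂ} (hf : MemLp f 2 volume) :
    L2norm f = 1 ↔ ∫ x, ‖f x‖ ^ 2 = 1 := by
  rw [L2norm, hf.eLpNorm_eq_integral_rpow_norm two_ne_zero ENNReal.ofNat_ne_top,
    ENNReal.toReal_ofReal (by positivity)]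
  norm_num [← Real.sqrt_eq_rpow]

lemma intervalIntegral_norm_le_sqrt_mul_sqrt {E : Type*} [NormedAddCommGroup E] {f : ℝ → E}
    (hf : MemLp f 2 volume) (a : ℝ) {L : ℝ} (hL : 0 ≤ L) :
    ∫ t in a..a + L, ‖f t‖ ≤ √L * √(∫ t, ‖f t‖ ^ 2) := by
  set μ := volume.restrict (Set.Ioc a (a + L))
  have hμ : μ Set.univ = ENNReal.ofReal L := by simp [μ]
  have : IsFiniteMeasure μ := ⟨by simp [hμ]⟩
  have holder := integral_mul_le_Lp_mul_Lq_of_nonneg (μ := μ) Real.HolderConjugate.two_two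
    (Eventually.of_forall fun t => norm_nonneg (f t)) (Eventually.of_forall fun _ => zero_le_one)
    (by simpa using (hf.restrict _).norm) (memLp_const (1 : ℝ))
  have hsq : ∫ t, ‖f t‖ ^ (2 : ℝ) ∂μ ≤ ∫ t, ‖f t‖ ^ 2 := by
    simp only [Real.rpow_two]
    exact setIntegral_le_integral (hf.integrable_norm_pow two_ne_zero)
      (Eventually.of_forall fun t => by positivity)
  calc ∫ t in a..a + L, ‖f t‖ = ∫ t, ‖f t‖ * 1 ∂μ := by
        simp [μ, intervalIntegral.integral_of_le (by linarith : a ≤ a + L)]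
    _ ≤ (∫ t, ‖f t‖ ^ (2 : ℝ) ∂μ) ^ (1 / 2 : ℝ) * (∫ _, (1 : ℝ) ^ (2 : ℝ) ∂μ) ^ (1 / 2 : ℝ) :=
        holder
    _ ≤ √(∫ t, ‖f t‖ ^ 2) * √L := by
        rw [← Real.sqrt_eq_rpow, ← Real.sqrt_eq_rpow]
        gcongr
        simp [μ, hL]
    _ = √L * √(∫ t, ‖f t‖ ^ 2) := mul_comm _ _

lemma integral_norm_pow_four_le {f : ℝ → ℂ} (hf : MemLp f 2 volume) {c : ℝ}
    (hc : ∀ x, ‖f x‖ ^ 2 ≤ c) : ∫ x, ‖f x‖ ^ 4 ≤ c * ∫ x, ‖f x‖ ^ 2 := by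
  rw [← integral_const_mul]
  refine integral_mono_of_nonneg (Eventually.of_forall fun x => by positivity)
    ((hf.integrable_norm_pow two_ne_zero).const_mul c) (Eventually.of_forall fun x => ?_)
  calc ‖f x‖ ^ 4 = ‖f x‖ ^ 2 * ‖f x‖ ^ 2 := by ring
    _ ≤ c * ‖f x‖ ^ 2 := by gcongr; exact hc x

lemma exists_integral_norm_pow_four_le {f : ℝ → ℂ} (hf : MemLp f 2 volume)
    (hf1 : L2norm f = 1) : ∃ a, ∫ x, ‖f x‖ ^ 4 ≤ 2 * ‖f a‖ ^ 2 := by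
  by_contra! h
  have hP := integral_norm_pow_four_le hf fun x => (le_div_iff₀' two_pos).2 (h x).le
  rw [(L2norm_eq_one_iff hf).1 hf1] at hP
  nlinarith [h 0, sq_nonneg ‖f 0‖]

namespace H1

variable (φ : H1)

lemma sub_eq_intervalIntegral (a b : ℝ) : φ.toFun b - φ.toFun a = ∫ t in a..b, φ.deriv t := by
  rw [φ.integral_deriv a, φ.integral_deriv b, ← intervalIntegral.integral_add_adjacent_intervals
    (φ.deriv_memL2.intervalIntegrable 0 a) (φ.deriv_memL2.intervalIntegrable a b)]
  ring

lemma continuous : Continuous φ.toFun := by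
  rw [funext φ.integral_deriv]
  exact continuous_const.add
    (intervalIntegral.continuous_primitive (φ.deriv_memL2.intervalIntegrable) 0)

lemma norm_le_norm_add_intervalIntegral {x y z : ℝ} (hxy : x ≤ y) (hyz : y ≤ z) :
    ‖φ.toFun x‖ ≤ ‖φ.toFun y‖ + ∫ t in x..z, ‖φ.deriv t‖ :=
  calc ‖φ.toFun x‖ ≤ ‖φ.toFun y‖ + ‖φ.toFun y - φ.toFun x‖ := norm_le_insert _ _
    _ ≤ ‖φ.toFun y‖ + ∫ t in x..y, ‖φ.deriv t‖ := by
        rw [φ.sub_eq_intervalIntegral]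
        gcongr
        exact intervalIntegral.norm_integral_le_integral_norm hxy
    _ ≤ ‖φ.toFun y‖ + ∫ t in x..z, ‖φ.deriv t‖ := by
        gcongr
        exact intervalIntegral.integral_mono_interval le_rfl hxy hyz
          (Eventually.of_forall fun t => norm_nonneg _) (φ.deriv_memL2.intervalIntegrable x z).norm

/-- Averaging `norm_le_norm_add_intervalIntegral` over `y ∈ [x, x + L]`. -/
lemma mul_norm_le {L : ℝ} (hL : 0 ≤ L) (x : ℝ) :
    L * ‖φ.toFun x‖ ≤ (∫ y in x..x + L, ‖φ.toFun y‖) + L * ∫ t in x..x + L, ‖φ.deriv t‖ := by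
  have hcont : Continuous fun y => ‖φ.toFun y‖ := φ.continuous.norm
  have h := intervalIntegral.integral_mono_on (by linarith : x ≤ x + L)
    (intervalIntegrable_const (μ := volume))
    ((hcont.add continuous_const).intervalIntegrable _ _)
    fun y hy => φ.norm_le_norm_add_intervalIntegral hy.1 hy.2
  simpa [intervalIntegral.integral_add (hcont.intervalIntegrable _ _) intervalIntegrable_const]
    using h

lemma sq_norm_le {L : ℝ} (hL : 0 < L) (x : ℝ) :
    ‖φ.toFun x‖ ^ 2 ≤ 2 * (∫ y, ‖φ.toFun y‖ ^ 2) / L + 2 * L * ∫ y, ‖φ.deriv y‖ ^ 2 := by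
  set N := ∫ y, ‖φ.toFun y‖ ^ 2
  set K := ∫ y, ‖φ.deriv y‖ ^ 2
  have hN : 0 ≤ N := integral_nonneg fun _ => by positivity
  have hK : 0 ≤ K := integral_nonneg fun _ => by positivity
  have hbound : L * ‖φ.toFun x‖ ≤ √L * √N + L * (√L * √K) :=
    (φ.mul_norm_le hL.le x).trans <| add_le_add
      (intervalIntegral_norm_le_sqrt_mul_sqrt φ.memL2 x hL.le)
      (mul_le_mul_of_nonneg_left
        (intervalIntegral_norm_le_sqrt_mul_sqrt φ.deriv_memL2 x hL.le) hL.le)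
  have hsL : √L ^ 2 = L := Real.sq_sqrt hL.le
  have hnorm : ‖φ.toFun x‖ ≤ √N / √L + √L * √K := by
    have hs : 0 < √L := Real.sqrt_pos.2 hL
    rw [div_add' _ _ _ hs.ne', le_div_iff₀ hs]
    refine le_of_mul_le_mul_left ?_ hs
    linear_combination hbound + (‖φ.toFun x‖ - √L * √K) * hsL
  calc ‖φ.toFun x‖ ^ 2 ≤ (√N / √L + √L * √K) ^ 2 := by gcongr
    _ ≤ 2 * (√N / √L) ^ 2 + 2 * (√L * √K) ^ 2 := by nlinarith [sq_nonneg (√N / √L - √L * √K)]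
    _ = 2 * N / L + 2 * L * K := by
        rw [div_pow, mul_pow, hsL, Real.sq_sqrt hN, Real.sq_sqrt hK]
        ring

def translate (a : ℝ) : H1 where
  toFun x := φ.toFun (x + a)
  deriv x := φ.deriv (x + a)
  memL2 := φ.memL2.comp_measurePreserving (measurePreserving_add_right volume a)
  deriv_memL2 := φ.deriv_memL2.comp_measurePreserving (measurePreserving_add_right volume a)
  integral_deriv x := by
    rw [intervalIntegral.integral_comp_add_right (fun t => φ.deriv t), zero_add,
      ← φ.sub_eq_intervalIntegral]
    ring

end H1

lemma pekarE0_translate (α β : ℝ) (φ : H1) (a : ℝ) :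
    pekarE0 α β (φ.translate a) = pekarET α φ - β * ‖φ.toFun a‖ ^ 2 := by
  simp only [pekarE0, pekarET, H1.translate, zero_add]
  rw [integral_add_right_eq_self (fun x => ‖φ.deriv x‖ ^ 2),
    integral_add_right_eq_self (fun x => ‖φ.toFun x‖ ^ 4)]

lemma L2norm_translate (φ : H1) (a : ℝ) : L2norm (φ.translate a).toFun = L2norm φ.toFun := by
  rw [L2norm, L2norm]
  congr 1
  exact eLpNorm_comp_measurePreserving φ.memL2.1 (measurePreserving_add_right volume a)

lemma pekarE0_zero_right (α : ℝ) (φ : H1) : pekarE0 α 0 φ = pekarET α φ := by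
  simp [pekarE0, pekarET]

lemma neg_le_pekarE0 {α β : ℝ} (hα : 0 ≤ α) (hβ : 0 ≤ β) {φ : H1} (hφ : L2norm φ.toFun = 1) :
    -((α + 2 * β) * (α + 2 * β + 1)) ≤ pekarE0 α β φ := by
  obtain ⟨γ, hγ⟩ : ∃ γ, γ = α + 2 * β := ⟨_, rfl⟩
  have hγ0 : 0 ≤ γ := by linarith
  have hK : 0 ≤ ∫ x, ‖φ.deriv x‖ ^ 2 := integral_nonneg fun _ => by positivity
  have hN := (L2norm_eq_one_iff φ.memL2).1 hφ
  -- with `L = 1 / (γ + 1)` the kinetic energy controls `γ sup |φ|²`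
  have hsup (x : ℝ) : ‖φ.toFun x‖ ^ 2 ≤
      2 * (γ + 1) + 2 * ((∫ x, ‖φ.deriv x‖ ^ 2) / (γ + 1)) := by
    refine (φ.sq_norm_le (L := 1 / (γ + 1)) (by positivity) x).trans_eq ?_
    rw [hN]
    field_simp
  have hP := integral_norm_pow_four_le φ.memL2 hsup
  rw [hN, mul_one] at hP
  have hfrac : γ * ((∫ x, ‖φ.deriv x‖ ^ 2) / (γ + 1)) ≤ ∫ x, ‖φ.deriv x‖ ^ 2 := by
    rw [mul_div_assoc', div_le_iff₀ (by positivity)]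
    nlinarith
  subst hγ
  unfold pekarE0
  linear_combination (α / 2) * hP + β * hsup 0 + hfrac

lemma bddBelow_pekarE0 {α β : ℝ} (hα : 0 ≤ α) (hβ : 0 ≤ β) :
    BddBelow {r : ℝ | ∃ φ : H1, L2norm φ.toFun = 1 ∧ pekarE0 α β φ = r} :=
  ⟨_, by rintro _ ⟨φ, hφ, rfl⟩; exact neg_le_pekarE0 hα hβ hφ⟩

lemma bddBelow_pekarET {α : ℝ} (hα : 0 ≤ α) :
    BddBelow {r : ℝ | ∃ φ : H1, L2norm φ.toFun = 1 ∧ pekarET α φ = r} := by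
  simpa only [pekarE0_zero_right] using bddBelow_pekarE0 hα le_rfl

lemma groundE0_le_mul_pekarET {α β : ℝ} (hα : 0 < α) (hβ : 0 ≤ β) {φ : H1}
    (hφ : L2norm φ.toFun = 1) : groundE0 α β ≤ (1 + β / α) * pekarET α φ := by
  obtain ⟨a, ha⟩ := exists_integral_norm_pow_four_le φ.memL2 hφ
  have hK : 0 ≤ ∫ x, ‖φ.deriv x‖ ^ 2 := integral_nonneg fun _ => by positivity
  calc groundE0 α β ≤ pekarE0 α β (φ.translate a) :=
        csInf_le (bddBelow_pekarE0 hα.le hβ) ⟨_, by rwa [L2norm_translate], rfl⟩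
    _ = pekarET α φ - β * ‖φ.toFun a‖ ^ 2 := pekarE0_translate α β φ a
    _ ≤ (1 + β / α) * pekarET α φ := by
        rw [add_mul, one_mul, div_mul_eq_mul_div, sub_eq_add_neg, add_le_add_iff_left,
          le_div_iff₀ hα]
        unfold pekarET
        nlinarith [mul_le_mul_of_nonneg_left ha hβ]

lemma integral_exp_neg_mul_abs {c : ℝ} (hc : 0 < c) : ∫ x, exp (-c * |x|) = 2 / c := by
  rw [integral_comp_abs (f := fun x => exp (-c * x)), integral_exp_mul_Ioi (by linarith)]
  field_simp
  simp

lemma integrable_exp_neg_mul_abs {c : ℝ} (hc : 0 < c) : Integrable fun x => exp (-c * |x|) :=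
  .of_integral_ne_zero (by rw [integral_exp_neg_mul_abs hc]; positivity)

def expAbs (s x : ℝ) : ℝ := √s * exp (-s * |x|)

def expAbsDeriv (s x : ℝ) : ℝ := (if x < 0 then s else -s) * √s * exp (-s * |x|)

lemma hasDerivAt_expAbs (s : ℝ) {x : ℝ} (hx : x ≠ 0) :
    HasDerivAt (expAbs s) (expAbsDeriv s x) x := by
  rcases hx.lt_or_gt with hx | hx
  · refine (((hasDerivAt_abs_neg hx).const_mul (-s)).exp.const_mul √s).congr_deriv ?_
    simp [expAbsDeriv, hx]; ring
  · refine (((hasDerivAt_abs_pos hx).const_mul (-s)).exp.const_mul √s).congr_deriv ?_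
    simp [expAbsDeriv, hx.not_gt]; ring

lemma norm_expAbs_pow (s : ℝ) (n : ℕ) (x : ℝ) :
    ‖(expAbs s x : ℂ)‖ ^ n = √s ^ n * exp (-(n * s) * |x|) := by
  rw [Complex.norm_real, Real.norm_of_nonneg (by unfold expAbs; positivity), expAbs, mul_pow,
    ← Real.exp_nat_mul]
  ring_nf

lemma norm_expAbsDeriv_sq {s : ℝ} (hs : 0 ≤ s) (x : ℝ) :
    ‖(expAbsDeriv s x : ℂ)‖ ^ 2 = s ^ 3 * exp (-(2 * s) * |x|) := by
  have hsign : (if x < 0 then s else -s) ^ 2 = s ^ 2 := by split_ifs <;> ring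
  rw [Complex.norm_real, Real.norm_eq_abs, sq_abs, expAbsDeriv, mul_pow, mul_pow, hsign,
    Real.sq_sqrt hs, ← Real.exp_nat_mul]
  ring_nf

lemma memLp_expAbs {s : ℝ} (hs : 0 < s) : MemLp (fun x => (expAbs s x : ℂ)) 2 volume := by
  refine (memLp_two_iff_integrable_sq_norm (by unfold expAbs; fun_prop)).2 ?_
  simp only [norm_expAbs_pow s]
  exact (integrable_exp_neg_mul_abs (by positivity)).const_mul _

lemma memLp_expAbsDeriv {s : ℝ} (hs : 0 < s) :
    MemLp (fun x => (expAbsDeriv s x : ℂ)) 2 volume := by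
  have hmeas : Measurable (expAbsDeriv s) :=
    ((Measurable.ite measurableSet_Iio measurable_const measurable_const).mul
      measurable_const).mul (by fun_prop)
  refine (memLp_two_iff_integrable_sq_norm (f := fun x => (expAbsDeriv s x : ℂ))
    (Complex.measurable_ofReal.comp hmeas).aestronglyMeasurable).2 ?_
  simp only [norm_expAbsDeriv_sq hs.le]
  exact (integrable_exp_neg_mul_abs (by positivity)).const_mul _

def expAbsH1 {s : ℝ} (hs : 0 < s) : H1 where
  toFun x := (expAbs s x : ℂ)
  deriv x := (expAbsDeriv s x : ℂ)
  memL2 := memLp_expAbs hs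
  deriv_memL2 := memLp_expAbsDeriv hs
  integral_deriv x := by
    rw [intervalIntegral.integral_eq_sub_of_hasDeriv_right (f := fun x => (expAbs s x : ℂ))
      (by unfold expAbs; fun_prop) (fun y hy => ?_)
      ((memLp_expAbsDeriv hs).intervalIntegrable 0 x)]
    · ring
    · have hy0 : y ≠ 0 := by
        rcases le_total 0 x with h | h <;> simp_all <;> grind
      exact (hasDerivAt_expAbs s hy0).ofReal_comp.hasDerivWithinAt

lemma L2norm_expAbsH1 {s : ℝ} (hs : 0 < s) : L2norm (expAbsH1 hs).toFun = 1 := by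
  rw [L2norm_eq_one_iff (expAbsH1 hs).memL2]
  simp only [expAbsH1, norm_expAbs_pow s, Nat.cast_ofNat]
  rw [integral_const_mul, integral_exp_neg_mul_abs (by positivity), Real.sq_sqrt hs.le]
  field_simp

lemma pekarET_expAbsH1 (α : ℝ) {s : ℝ} (hs : 0 < s) :
    pekarET α (expAbsH1 hs) = s ^ 2 - α / 4 * s := by
  simp only [pekarET, expAbsH1, norm_expAbs_pow s, norm_expAbsDeriv_sq hs.le, Nat.cast_ofNat]
  rw [integral_const_mul, integral_const_mul, integral_exp_neg_mul_abs (by positivity),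
    integral_exp_neg_mul_abs (by positivity), show √s ^ 4 = (√s ^ 2) ^ 2 by ring,
    Real.sq_sqrt hs.le]
  field_simp

lemma exists_pekarET_neg {α : ℝ} (hα : 0 < α) :
    ∃ φ : H1, L2norm φ.toFun = 1 ∧ pekarET α φ < 0 := by
  have hs : 0 < α / 8 := by positivity
  refine ⟨expAbsH1 hs, L2norm_expAbsH1 hs, ?_⟩
  rw [pekarET_expAbsH1]
  nlinarith

lemma groundET_neg {α : ℝ} (hα : 0 < α) : groundET α < 0 := by
  obtain ⟨φ, hφ, hneg⟩ := exists_pekarET_neg hα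
  exact (csInf_le (bddBelow_pekarET hα.le) ⟨φ, hφ, rfl⟩).trans_lt hneg

lemma exists_pekarET_lt {α b : ℝ} (hb : groundET α < b) :
    ∃ φ : H1, L2norm φ.toFun = 1 ∧ pekarET α φ < b := by
  obtain ⟨_, ⟨φ, hφ, rfl⟩, hlt⟩ :=
    exists_lt_of_csInf_lt (s := {r : ℝ | ∃ φ : H1, L2norm φ.toFun = 1 ∧ pekarET α φ = r})
      ⟨_, expAbsH1 one_pos, L2norm_expAbsH1 one_pos, rfl⟩ hb
  exact ⟨φ, hφ, hlt⟩

/-- **Strict binding inequality:** `e₀ < e_T`. -/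
theorem groundE0_lt_groundET (α β : ℝ) (hα : 0 < α) (hβ : 0 < β) :
    groundE0 α β < groundET α := by
  set c := 1 + β / α
  have hc : 1 < c := lt_add_of_pos_right 1 (div_pos hβ hα)
  have hET := groundET_neg hα
  obtain ⟨φ, hφ, hlt⟩ := exists_pekarET_lt
    (show groundET α < groundET α / c by rw [lt_div_iff₀ (by linarith)]; nlinarith)
  calc groundE0 α β ≤ c * pekarET α φ := groundE0_le_mul_pekarET hα hβ.le hφ
    _ < c * (groundET α / c) := by gcongr
    _ = groundET α := mul_div_cancel₀ _ (by positivity)
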